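/- arXiv:2004.07118 — 8 statements merged into one kernel-verified Lean document; each statement's English description precedes it below -/
import Mathlib

section
/- Let G be a complete k-edge-colored graph together with a labeling ℓ, and suppose (G,ℓ) is a complete k-edge-colored permutation graph of permutations π_1,…,π_k. Then G contains no rainbow triangle, and for every color i ∈ {1,…,k} the i-th monochromatic subgraph G_{|i} together with ℓ is a simple permutation graph (of π_i). -/
/-- The edge relation `E` on `V` together with the labeling `ℓ : V ≃ Fin n`
is the simple permutation graph of the permutation `π` of `{1,…,n}`:
`{u,v} ∈ E ⇔ ℓ(u) > ℓ(v) and π⁻¹(ℓ(u)) < π⁻¹(ℓ(v))` (stated symmetrically in `u,v`). -/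
def IsPermGraph {V : Type*} {n : ℕ} (E : V → V → Prop) (ℓ : V ≃ Fin n)
    (π : Equiv.Perm (Fin n)) : Prop :=
  ∀ u v : V, E u v ↔
    ((ℓ v < ℓ u ∧ π⁻¹ (ℓ u) < π⁻¹ (ℓ v)) ∨ (ℓ u < ℓ v ∧ π⁻¹ (ℓ v) < π⁻¹ (ℓ u)))

/-- `c` is the edge-coloring of a complete `k`-edge-colored graph on `V`:
it is symmetric, every pair of distinct vertices receives a color in `{1,…,k}`,
and every color in `{1,…,k}` occurs on some edge. -/
def IsCompleteColoring {V : Type*} (k : ℕ) (c : V → V → ℕ) : Prop :=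
  (∀ u v : V, c u v = c v u) ∧
  (∀ u v : V, u ≠ v → c u v ∈ Finset.Icc 1 k) ∧
  (∀ i ∈ Finset.Icc 1 k, ∃ u v : V, u ≠ v ∧ c u v = i)

/-- The edge relation of the `i`-th monochromatic subgraph `G_{|i}`. -/
def monoEdge {V : Type*} (c : V → V → ℕ) (i : ℕ) : V → V → Prop :=
  fun u v => u ≠ v ∧ c u v = i

/-- The complete edge-colored graph with coloring `c` is a complete edge-colored
permutation graph: there are a labeling `ℓ` and permutations `π i` such that every
monochromatic subgraph `(G_{|i}, ℓ)` is the simple permutation graph of `π i`. -/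
def IsCECPG {V : Type*} [Fintype V] (c : V → V → ℕ) : Prop :=
  ∃ (ℓ : V ≃ Fin (Fintype.card V)) (π : ℕ → Equiv.Perm (Fin (Fintype.card V))),
    ∀ i : ℕ, IsPermGraph (monoEdge c i) ℓ (π i)

/-- `c` contains a rainbow triangle: three vertices whose three connecting edges
have pairwise distinct colors. -/
def HasRainbowTriangle {V : Type*} (c : V → V → ℕ) : Prop :=
  ∃ u v w : V, u ≠ v ∧ u ≠ w ∧ v ≠ w ∧
    c u v ≠ c u w ∧ c u v ≠ c v w ∧ c u w ≠ c v w

/-- If `(G,ℓ)` is a complete `k`-edge-colored permutation graph of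
`π_1,…,π_k`, then `G` has no rainbow triangle and every monochromatic subgraph
`(G_{|i}, ℓ)` is a simple permutation graph of `π_i`. -/
theorem stmt0 {V : Type*} [Fintype V] [Nonempty V] (k : ℕ) (c : V → V → ℕ)
    (hc : IsCompleteColoring k c)
    (ℓ : V ≃ Fin (Fintype.card V)) (π : ℕ → Equiv.Perm (Fin (Fintype.card V)))
    (h : ∀ i ∈ Finset.Icc 1 k, IsPermGraph (monoEdge c i) ℓ (π i)) :
    ¬ HasRainbowTriangle c ∧
      ∀ i ∈ Finset.Icc 1 k, IsPermGraph (monoEdge c i) ℓ (π i) := by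
  refine ⟨?_, h⟩
  rintro ⟨u, v, w, huv, huw, hvw, h1, h2, h3⟩
  have Hi := h _ (hc.2.1 u v huv)
  have Hj := h _ (hc.2.1 u w huw)
  have Hm := h _ (hc.2.1 v w hvw)
  have Ii := (Hi u v).mp ⟨huv, rfl⟩
  have Ij := (Hj u w).mp ⟨huw, rfl⟩
  have Im := (Hm v w).mp ⟨hvw, rfl⟩
  have Ni1 := mt (Hi u w).mpr (fun h' : monoEdge c (c u v) u w => h1 h'.2.symm)
  have Ni2 := mt (Hi v w).mpr (fun h' : monoEdge c (c u v) v w => h2 h'.2.symm)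
  have Nj1 := mt (Hj u v).mpr (fun h' : monoEdge c (c u w) u v => h1 h'.2)
  have Nj2 := mt (Hj v w).mpr (fun h' : monoEdge c (c u w) v w => h3 h'.2.symm)
  have Nm1 := mt (Hm u v).mpr (fun h' : monoEdge c (c v w) u v => h2 h'.2)
  have Nm2 := mt (Hm u w).mpr (fun h' : monoEdge c (c v w) u w => h3 h'.2)
  have duv : ℓ u ≠ ℓ v := fun e => huv (ℓ.injective e)
  have duw : ℓ u ≠ ℓ w := fun e => huw (ℓ.injective e)
  have dvw : ℓ v ≠ ℓ w := fun e => hvw (ℓ.injective e)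
  have piuv : (π (c u v))⁻¹ (ℓ u) ≠ (π (c u v))⁻¹ (ℓ v) :=
    fun e => duv ((π (c u v))⁻¹.injective e)
  have piuw : (π (c u v))⁻¹ (ℓ u) ≠ (π (c u v))⁻¹ (ℓ w) :=
    fun e => duw ((π (c u v))⁻¹.injective e)
  have pivw : (π (c u v))⁻¹ (ℓ v) ≠ (π (c u v))⁻¹ (ℓ w) :=
    fun e => dvw ((π (c u v))⁻¹.injective e)
  have pjuv : (π (c u w))⁻¹ (ℓ u) ≠ (π (c u w))⁻¹ (ℓ v) :=
    fun e => duv ((π (c u w))⁻¹.injective e)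
  have pjuw : (π (c u w))⁻¹ (ℓ u) ≠ (π (c u w))⁻¹ (ℓ w) :=
    fun e => duw ((π (c u w))⁻¹.injective e)
  have pjvw : (π (c u w))⁻¹ (ℓ v) ≠ (π (c u w))⁻¹ (ℓ w) :=
    fun e => dvw ((π (c u w))⁻¹.injective e)
  have pmuv : (π (c v w))⁻¹ (ℓ u) ≠ (π (c v w))⁻¹ (ℓ v) :=
    fun e => duv ((π (c v w))⁻¹.injective e)
  have pmuw : (π (c v w))⁻¹ (ℓ u) ≠ (π (c v w))⁻¹ (ℓ w) :=
    fun e => duw ((π (c v w))⁻¹.injective e)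
  have pmvw : (π (c v w))⁻¹ (ℓ v) ≠ (π (c v w))⁻¹ (ℓ w) :=
    fun e => dvw ((π (c v w))⁻¹.injective e)
  simp only [Fin.lt_def] at Ii Ij Im Ni1 Ni2 Nj1 Nj2 Nm1 Nm2
  simp only [ne_eq, Fin.ext_iff] at duv duw dvw piuv piuw pivw pjuv pjuw pjvw pmuv pmuw pmvw
  generalize (ℓ u).val = a at *
  generalize (ℓ v).val = b at *
  generalize (ℓ w).val = cc at *
  generalize ((π (c u v))⁻¹ (ℓ u)).val = ia at *
  generalize ((π (c u v))⁻¹ (ℓ v)).val = ib at *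
  generalize ((π (c u v))⁻¹ (ℓ w)).val = ic at *
  generalize ((π (c u w))⁻¹ (ℓ u)).val = ja at *
  generalize ((π (c u w))⁻¹ (ℓ v)).val = jb at *
  generalize ((π (c u w))⁻¹ (ℓ w)).val = jc at *
  generalize ((π (c v w))⁻¹ (ℓ u)).val = ma at *
  generalize ((π (c v w))⁻¹ (ℓ v)).val = mb at *
  generalize ((π (c v w))⁻¹ (ℓ w)).val = mc at *
  rcases Ii with ⟨hI1, hI2⟩ | ⟨hI1, hI2⟩ <;> rcases Ij with ⟨hJ1, hJ2⟩ | ⟨hJ1, hJ2⟩ <;>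
    rcases Im with ⟨hM1, hM2⟩ | ⟨hM1, hM2⟩ <;> omega
end

section
/- Let G be a complete k-edge-colored graph. If every monochromatic subgraph G_{|i} of G is a simple permutation graph (each possibly with its own labeling) and G contains no rainbow triangle, then G is a complete edge-colored permutation graph, i.e., there exist a single labeling ℓ of G and permutations π_1,…,π_k of {1,…,|V|} such that for every i, (G_{|i},ℓ) is a simple permutation graph of π_i. -/
section

variable {V : Type*}

def IsTransitiveAlong {α : Type*} [LT α] (E : V → V → Prop) (f : V → α) : Prop :=
  ∀ x y z, f x < f y → f y < f z → (E x y → E y z → E x z) ∧ (¬ E x y → ¬ E y z → ¬ E x z)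

lemma IsTransitiveAlong.of_lt_iff {α β : Type*} [LT α] [LT β] {E : V → V → Prop} {f : V → α}
    {g : V → β} (h : IsTransitiveAlong E f) (hfg : ∀ u v, f u < f v ↔ g u < g v) :
    IsTransitiveAlong E g :=
  fun x y z hxy hyz => h x y z ((hfg x y).2 hxy) ((hfg y z).2 hyz)

lemma exists_equiv_fin_of_isStrictTotalOrder [Fintype V] (r : V → V → Prop)
    [IsStrictTotalOrder V r] : ∃ σ : V ≃ Fin (Fintype.card V), ∀ u v, r u v ↔ σ u < σ v := by
  classical
  let := linearOrderOfSTO r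
  let σ := (Fintype.orderIsoFinOfCardEq V rfl).symm
  exact ⟨σ.toEquiv, fun u v => σ.lt_iff_lt.symm⟩

lemma exists_equiv_fin_of_injective [Fintype V] {α : Type*} [LinearOrder α] {f : V → α}
    (hf : Function.Injective f) :
    ∃ σ : V ≃ Fin (Fintype.card V), ∀ u v, f u < f v ↔ σ u < σ v := by
  let := LinearOrder.lift' f hf
  let σ := (Fintype.orderIsoFinOfCardEq V rfl).symm
  exact ⟨σ.toEquiv, fun u v => σ.lt_iff_lt.symm⟩

namespace IsPermGraph

variable {n : ℕ} {E : V → V → Prop} {ℓ : V ≃ Fin n} {π : Equiv.Perm (Fin n)}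

lemma adj_iff_of_lt (h : IsPermGraph E ℓ π) {u v : V} (huv : ℓ u < ℓ v) :
    E u v ↔ π⁻¹ (ℓ v) < π⁻¹ (ℓ u) := by
  simp [h u v, huv, huv.not_gt]

lemma isTransitiveAlong (h : IsPermGraph E ℓ π) : IsTransitiveAlong E ℓ := by
  intro x y z hxy hyz
  simp only [h.adj_iff_of_lt hxy, h.adj_iff_of_lt hyz, h.adj_iff_of_lt (hxy.trans hyz), not_lt]
  exact ⟨fun h₁ h₂ => h₂.trans h₁, fun h₁ h₂ => h₁.trans h₂⟩

end IsPermGraph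

lemma exists_isPermGraph_of_isTransitiveAlong [Fintype V] {E : V → V → Prop}
    (hsymm : ∀ u v, E u v → E v u) (hirr : ∀ u, ¬ E u u) {ℓ : V ≃ Fin (Fintype.card V)}
    (hE : IsTransitiveAlong E ℓ) : ∃ π, IsPermGraph E ℓ π := by
  -- `u` precedes `v` in the order encoded by `π`: `E` marks exactly the pairs whose order flips
  let r u v := (ℓ u < ℓ v ∧ ¬ E u v) ∨ (ℓ v < ℓ u ∧ E u v)
  have : IsStrictTotalOrder V r :=
    { irrefl := fun u h => by grind
      trichotomous := fun u v h₁ h₂ => by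
        have := hsymm u v
        have := hsymm v u
        have := ℓ.injective.eq_iff (a := u) (b := v)
        grind
      trans := by
        rintro x y z (⟨hxy, nxy⟩ | ⟨hyx, exy⟩) (⟨hyz, nyz⟩ | ⟨hzy, eyz⟩)
        · exact .inl ⟨hxy.trans hyz, (hE x y z hxy hyz).2 nxy nyz⟩
        · have hxz : x ≠ z := fun h => nxy (h ▸ hsymm _ _ eyz)
          rcases lt_or_gt_of_ne (ℓ.injective.ne hxz) with hxz | hzx
          · exact .inl ⟨hxz, fun exz => nxy ((hE x z y hxz hzy).1 exz (hsymm _ _ eyz))⟩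
          · refine .inr ⟨hzx, by_contra fun nxz => ?_⟩
            exact (hE z x y hzx hxy).2 (fun ezx => nxz (hsymm _ _ ezx)) nxy (hsymm _ _ eyz)
        · have hxz : x ≠ z := fun h => nyz (h ▸ hsymm _ _ exy)
          rcases lt_or_gt_of_ne (ℓ.injective.ne hxz) with hxz | hzx
          · exact .inl ⟨hxz, fun exz => nyz ((hE y x z hyx hxz).1 (hsymm _ _ exy) exz)⟩
          · refine .inr ⟨hzx, by_contra fun nxz => ?_⟩
            exact (hE y z x hyz hzx).2 nyz (fun ezx => nxz (hsymm _ _ ezx)) (hsymm _ _ exy)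
        · exact .inr ⟨hzy.trans hyx,
            hsymm _ _ ((hE z y x hzy hyx).1 (hsymm _ _ eyz) (hsymm _ _ exy))⟩ }
  obtain ⟨σ, hσ⟩ := exists_equiv_fin_of_isStrictTotalOrder r
  refine ⟨(ℓ.symm.trans σ).symm, fun u v => ?_⟩
  simp only [Equiv.Perm.inv_def, Equiv.symm_symm, Equiv.trans_apply, Equiv.symm_apply_apply,
    ← hσ]
  have := hsymm u v
  have := hirr u
  have := ℓ.injective.eq_iff (a := u) (b := v)
  grind

section Coloring

variable {c : V → V → ℕ}

lemma monoEdge_symm (hsym : ∀ u v, c u v = c v u) (i : ℕ) (u v : V) :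
    monoEdge c i u v → monoEdge c i v u :=
  fun ⟨hne, hc⟩ => ⟨hne.symm, hsym v u ▸ hc⟩

lemma color_eq_of_ne_of_ne (hsym : ∀ u v, c u v = c v u) (hnr : ¬ HasRainbowTriangle c)
    {x y z : V} (h₁ : c x y ≠ c x z) (h₂ : c x y ≠ c y z) : c x z = c y z := by
  by_contra h₃
  obtain rfl | hxy := eq_or_ne x y
  · exact h₃ rfl
  obtain rfl | hxz := eq_or_ne x z
  · exact h₂ (hsym _ _)
  obtain rfl | hyz := eq_or_ne y z
  · exact h₁ rfl
  exact hnr ⟨x, y, z, hxy, hxz, hyz, h₁, h₂, h₃⟩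

lemma IsTransitiveAlong.color_eq_or_color_eq {α β : ℕ} {e : V → ℕ}
    (he : IsTransitiveAlong (monoEdge c α) e) {x y z : V} (hxy : x ≠ y) (hyz : y ≠ z)
    (hxz : x ≠ z) (hexy : e x < e y) (heyz : e y < e z) (h₁ : c x y = α ∨ c x y = β)
    (h₂ : c y z = α ∨ c y z = β) (h₃ : c x z = α ∨ c x z = β) :
    c x z = c x y ∨ c x z = c y z := by
  have := he x y z hexy heyz
  simp only [monoEdge, ne_eq, hxy, hyz, hxz, not_false_eq_true, true_and] at this
  grind

def IsColorOrderOn {α : Type*} [LinearOrder α] (c : V → V → ℕ) (S : Finset V) (f : V → α) :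
    Prop :=
  Set.InjOn f S ∧ ∀ x ∈ S, ∀ y ∈ S, ∀ z ∈ S, f x < f y → f y < f z →
    c x z = c x y ∨ c x z = c y z

lemma IsColorOrderOn.isTransitiveAlong_monoEdge {α : Type*} [LinearOrder α] [Fintype V]
    {f : V → α} (h : IsColorOrderOn c Finset.univ f) (i : ℕ) :
    IsTransitiveAlong (monoEdge c i) f := by
  intro x y z hxy hyz
  have hxz : x ≠ z := fun hxz => (hxz ▸ hxy.trans hyz).false
  have := h.2 x (Finset.mem_univ _) y (Finset.mem_univ _) z (Finset.mem_univ _) hxy hyz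
  simp only [monoEdge]
  grind

def IsModularColorOrderOn (c : V → V → ℕ) (S : Finset V) (κ : V → ℕ) : Prop :=
  (∀ x ∈ S, ∀ y ∈ S, ∀ z ∈ S, κ x = κ y → κ x ≠ κ z → c x z = c y z) ∧
  ∀ x ∈ S, ∀ y ∈ S, ∀ z ∈ S, κ x < κ y → κ y < κ z → c x z = c x y ∨ c x z = c y z

lemma IsModularColorOrderOn.isColorOrderOn_cons (hsym : ∀ u v, c u v = c v u) {S : Finset V}
    {κ : V → ℕ} (hκ : IsModularColorOrderOn c S κ) {g : ℕ → V → List ℕ}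
    (hg : ∀ x ∈ S, IsColorOrderOn c {y ∈ S | κ y = κ x} (g (κ x))) :
    IsColorOrderOn c S (fun x => κ x :: g (κ x) x) := by
  have mem_block {x y : V} (hy : y ∈ S) (h : κ y = κ x) : y ∈ {y ∈ S | κ y = κ x} :=
    Finset.mem_filter.2 ⟨hy, h⟩
  refine ⟨fun x hx y hy hxy => ?_, fun x hx y hy z hz hxy hyz => ?_⟩
  · obtain ⟨hκxy, hgxy⟩ := List.cons_eq_cons.1 hxy
    rw [← hκxy] at hgxy
    exact (hg x hx).1 (mem_block hx rfl) (mem_block hy hκxy.symm) hgxy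
  rw [List.cons_lt_cons_iff] at hxy hyz
  rcases hxy with hxy | ⟨hκxy, hgxy⟩ <;> rcases hyz with hyz | ⟨hκyz, hgyz⟩
  · exact hκ.2 x hx y hy z hz hxy hyz
  · left
    rw [hsym x z, hsym x y]
    exact (hκ.1 y hy z hz x hx hκyz (hκyz ▸ hxy.ne')).symm
  · right
    exact hκ.1 x hx y hy z hz hκxy (hκxy ▸ hyz.ne)
  · rw [← hκxy] at hgxy hgyz hκyz
    rw [← hκyz] at hgyz
    exact (hg x hx).2 x (mem_block hx rfl) y (mem_block hy hκxy.symm) z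
      (mem_block hz hκyz.symm) hgxy hgyz

end Coloring

section Reachability

variable {c : V → V → ℕ} {S : Finset V} {α β : ℕ} {v x y z : V}

def AvoidAdj (c : V → V → ℕ) (S : Finset V) (α β : ℕ) (x y : V) : Prop :=
  x ∈ S ∧ y ∈ S ∧ x ≠ y ∧ c x y ≠ α ∧ c x y ≠ β

abbrev AvoidReach (c : V → V → ℕ) (S : Finset V) (α β : ℕ) : V → V → Prop :=
  Relation.ReflTransGen (AvoidAdj c S α β)

lemma AvoidAdj.symm (hsym : ∀ u v, c u v = c v u) (h : AvoidAdj c S α β x y) :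
    AvoidAdj c S α β y x := by
  obtain ⟨hx, hy, hne, hα, hβ⟩ := h
  exact ⟨hy, hx, hne.symm, hsym x y ▸ hα, hsym x y ▸ hβ⟩

lemma AvoidReach.symm (hsym : ∀ u v, c u v = c v u) (h : AvoidReach c S α β x y) :
    AvoidReach c S α β y x := by
  induction h with
  | refl => exact .refl
  | tail _ hab ih => exact .head (hab.symm hsym) ih

lemma AvoidReach.mem (hx : x ∈ S) (h : AvoidReach c S α β x y) : y ∈ S := by
  rcases h.cases_tail with rfl | ⟨_, _, hadj⟩
  exacts [hx, hadj.2.1]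

lemma color_mem_of_not_avoidReach (hx : x ∈ S) (hy : y ∈ S) (h : ¬ AvoidReach c S α β x y) :
    c x y = α ∨ c x y = β := by
  by_contra! hc
  exact h (.single ⟨hx, hy, fun hxy => h (hxy ▸ .refl), hc⟩)

lemma AvoidReach.color_eq (hsym : ∀ u v, c u v = c v u) (hnr : ¬ HasRainbowTriangle c)
    {x' : V} (hxx' : AvoidReach c S α β x x') (hxy : ¬ AvoidReach c S α β x y) (hy : y ∈ S) :
    c x y = c x' y := by
  induction hxx' with
  | refl => rfl
  | @tail a b hxa hab ih =>
    have hay := color_mem_of_not_avoidReach hab.1 hy fun h => hxy (hxa.trans h)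
    have hby := color_mem_of_not_avoidReach hab.2.1 hy fun h => hxy ((hxa.tail hab).trans h)
    obtain ⟨-, -, -, hα, hβ⟩ := hab
    rw [ih]
    exact color_eq_of_ne_of_ne hsym hnr (by omega) (by omega)

lemma AvoidReach.color_eq_color (hsym : ∀ u v, c u v = c v u) (hnr : ¬ HasRainbowTriangle c)
    {x' y' : V} (hx : x ∈ S) (hy : y ∈ S) (hxx' : AvoidReach c S α β x x')
    (hyy' : AvoidReach c S α β y y') (hxy : ¬ AvoidReach c S α β x y) : c x y = c x' y' :=
  calc c x y = c x' y := hxx'.color_eq hsym hnr hxy hy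
    _ = c y x' := hsym _ _
    _ = c y' x' := hyy'.color_eq hsym hnr (fun h => hxy (hxx'.trans (h.symm hsym))) (hxx'.mem hx)
    _ = c x' y' := hsym _ _

lemma not_avoidReach_of_forall (hv : ∀ y ∈ S, y ≠ v → c v y = α ∨ c v y = β) (hy : y ≠ v) :
    ¬ AvoidReach c S α β v y := by
  intro h
  rcases h.cases_head with rfl | ⟨b, ⟨-, hb, hvb, hα, hβ⟩, -⟩
  · exact hy rfl
  · rcases hv b hb hvb.symm with h | h <;> contradiction

end Reachability

section Gallai

variable {c : V → V → ℕ} {S : Finset V} {α β : ℕ} {v w a b : V}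

lemma not_avoidReach_insert [DecidableEq V] (hvS : v ∉ S) (hw : w ∈ S)
    (hcol : ∀ a ∈ S, AvoidReach c S α β w a → c a v = α ∨ c a v = β) :
    ¬ AvoidReach c (insert v S) α β w v := by
  suffices ∀ y, AvoidReach c (insert v S) α β w y → AvoidReach c S α β w y from
    fun h => hvS ((this v h).mem hw)
  intro y h
  induction h with
  | refl => exact .refl
  | @tail a b _ hab ih =>
    obtain ⟨-, hb, hne, hα, hβ⟩ := hab
    have ha := ih.mem hw
    obtain rfl | hb := Finset.mem_insert.1 hb
    · have := hcol a ha ih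
      omega
    · exact ih.tail ⟨ha, hb, hne, hα, hβ⟩

lemma color_apex_eq_of_not_avoidReach (hsym : ∀ u v, c u v = c v u)
    (hnr : ¬ HasRainbowTriangle c) (ha : a ∈ S) (hb : b ∈ S) (haα : c v a ≠ α)
    (haβ : c v a ≠ β) (hbα : c v b ≠ α) (hbβ : c v b ≠ β) (hab : ¬ AvoidReach c S α β a b) :
    c v a = c v b := by
  have := color_mem_of_not_avoidReach ha hb hab
  have h := color_eq_of_ne_of_ne hsym hnr (x := a) (y := b) (z := v)
    (by rw [hsym a v]; omega) (by rw [hsym b v]; omega)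
  rwa [hsym a v, hsym b v] at h

lemma color_eq_apex_of_not_avoidReach (hsym : ∀ u v, c u v = c v u)
    (hnr : ¬ HasRainbowTriangle c) (hb : b ∈ S) (ha : a ∈ S) (hb' : c v b = α ∨ c v b = β)
    (haα : c v a ≠ α) (haβ : c v a ≠ β) (hba : ¬ AvoidReach c S α β b a) :
    c b a = c v b := by
  have := color_mem_of_not_avoidReach hb ha hba
  have h := color_eq_of_ne_of_ne hsym hnr (x := v) (y := a) (z := b)
    (by omega) (by rw [hsym a b]; omega)
  rw [h, hsym a b]

lemma false_of_apex_colors (hsym : ∀ u v, c u v = c v u) (hnr : ¬ HasRainbowTriangle c)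
    (hab : α ≠ β) (hcov : ∀ w ∈ S, ∃ a ∈ S, AvoidReach c S α β w a ∧ c v a ≠ α ∧ c v a ≠ β)
    {a₁ a₂ x y : V} (ha₁ : a₁ ∈ S) (ha₂ : a₂ ∈ S) (ha₁α : c v a₁ ≠ α) (ha₁β : c v a₁ ≠ β)
    (ha₂α : c v a₂ ≠ α) (ha₂β : c v a₂ ≠ β) (ha₁₂ : ¬ AvoidReach c S α β a₁ a₂)
    (hx : x ∈ S) (hy : y ∈ S) (hxα : c v x = α) (hyβ : c v y = β) : False := by
  by_cases hxy : AvoidReach c S α β x y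
  · obtain ⟨a, ha, haα, haβ, hxa⟩ : ∃ a ∈ S, c v a ≠ α ∧ c v a ≠ β ∧ ¬ AvoidReach c S α β x a := by
      by_contra! h
      exact ha₁₂ (((h a₁ ha₁ ha₁α ha₁β).symm hsym).trans (h a₂ ha₂ ha₂α ha₂β))
    have h₁ := color_eq_apex_of_not_avoidReach hsym hnr hx ha (.inl hxα) haα haβ hxa
    have h₂ := color_eq_apex_of_not_avoidReach hsym hnr hy ha (.inr hyβ) haα haβ
      fun h => hxa (hxy.trans h)
    have := hxy.color_eq hsym hnr hxa ha
    omega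
  · obtain ⟨a, ha, hxa, haα, haβ⟩ := hcov x hx
    obtain ⟨b, hb, hyb, hbα, hbβ⟩ := hcov y hy
    have h₁ := color_eq_apex_of_not_avoidReach hsym hnr hx hb (.inl hxα) hbα hbβ
      fun h => hxy (h.trans (hyb.symm hsym))
    have h₂ := color_eq_apex_of_not_avoidReach hsym hnr hy ha (.inr hyβ) haα haβ
      fun h => hxy (hxa.trans (h.symm hsym))
    have h₃ := hxa.color_eq_color hsym hnr hx hy .refl hxy
    have h₄ := AvoidReach.color_eq_color (S := S) (α := α) (β := β) hsym hnr hx hy .refl hyb hxy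
    have := hsym a y
    omega

lemma exists_not_avoidReach_insert_of_covered [DecidableEq V] (hsym : ∀ u v, c u v = c v u)
    (hnr : ¬ HasRainbowTriangle c) {x₁ y₁ : V} (hvS : v ∉ S)
    (hab : α ≠ β) (hx₁ : x₁ ∈ S) (hy₁ : y₁ ∈ S) (hsep : ¬ AvoidReach c S α β x₁ y₁)
    (hcov : ∀ w ∈ S, ∃ a ∈ S, AvoidReach c S α β w a ∧ c v a ≠ α ∧ c v a ≠ β) :
    ∃ α' β', α' ≠ β' ∧ ∃ x ∈ insert v S, ∃ y ∈ insert v S,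
      ¬ AvoidReach c (insert v S) α' β' x y := by
  obtain ⟨a₁, ha₁, hxa₁, ha₁α, ha₁β⟩ := hcov x₁ hx₁
  obtain ⟨a₂, ha₂, hya₂, ha₂α, ha₂β⟩ := hcov y₁ hy₁
  have ha₁₂ : ¬ AvoidReach c S α β a₁ a₂ :=
    fun h => hsep (hxa₁.trans (h.trans (hya₂.symm hsym)))
  have hδ : ∀ a ∈ S, c v a ≠ α → c v a ≠ β → c v a = c v a₁ := by
    intro a ha haα haβ
    by_cases haa₁ : AvoidReach c S α β a a₁
    · rw [color_apex_eq_of_not_avoidReach hsym hnr ha ha₂ haα haβ ha₂α ha₂β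
        fun h => ha₁₂ ((haa₁.symm hsym).trans h)]
      exact (color_apex_eq_of_not_avoidReach hsym hnr ha₁ ha₂ ha₁α ha₁β ha₂α ha₂β ha₁₂).symm
    · exact color_apex_eq_of_not_avoidReach hsym hnr ha ha₁ haα haβ ha₁α ha₁β haa₁
  have hv₁ : x₁ ≠ v := ne_of_mem_of_not_mem hx₁ hvS
  by_cases hα : ∃ x ∈ S, c v x = α
  · by_cases hβ : ∃ y ∈ S, c v y = β
    · obtain ⟨x, hx, hxα⟩ := hα
      obtain ⟨y, hy, hyβ⟩ := hβ
      exact (false_of_apex_colors hsym hnr hab hcov ha₁ ha₂ ha₁α ha₁β ha₂α ha₂β ha₁₂ hx hy hxα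
        hyβ).elim
    push Not at hβ
    refine ⟨α, c v a₁, Ne.symm ha₁α, v, Finset.mem_insert_self _ _, x₁,
      Finset.mem_insert_of_mem hx₁, not_avoidReach_of_forall (fun y hy hyv => ?_) hv₁⟩
    have hy := (Finset.mem_insert.1 hy).resolve_left hyv
    by_cases h : c v y = α
    exacts [.inl h, .inr (hδ y hy h (hβ y hy))]
  push Not at hα
  refine ⟨β, c v a₁, Ne.symm ha₁β, v, Finset.mem_insert_self _ _, x₁,
    Finset.mem_insert_of_mem hx₁, not_avoidReach_of_forall (fun y hy hyv => ?_) hv₁⟩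
  have hy := (Finset.mem_insert.1 hy).resolve_left hyv
  by_cases h : c v y = β
  exacts [.inl h, .inr (hδ y hy (hα y hy) h)]

theorem exists_not_avoidReach (hsym : ∀ u v, c u v = c v u) (hnr : ¬ HasRainbowTriangle c)
    (S : Finset V) (hS : 2 ≤ S.card) :
    ∃ α β, α ≠ β ∧ ∃ x ∈ S, ∃ y ∈ S, ¬ AvoidReach c S α β x y := by
  classical
  induction S using Finset.induction_on with
  | empty => simp at hS
  | insert v S hvS ih =>
    rw [Finset.card_insert_of_notMem hvS] at hS
    obtain ⟨w, hw⟩ := Finset.card_pos.1 (by omega : 0 < S.card)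
    have hwv : w ≠ v := ne_of_mem_of_not_mem hw hvS
    rcases lt_or_ge S.card 2 with hS₁ | hS₂
    · refine ⟨c v w, c v w + 1, by omega, v, Finset.mem_insert_self _ _, w,
        Finset.mem_insert_of_mem hw, not_avoidReach_of_forall (fun y hy hyv => .inl ?_) hwv⟩
      rw [Finset.card_le_one.1 (by omega) y ((Finset.mem_insert.1 hy).resolve_left hyv) w hw]
    obtain ⟨α, β, hab, x₁, hx₁, y₁, hy₁, hsep⟩ := ih hS₂
    by_cases hcov : ∀ w ∈ S, ∃ a ∈ S, AvoidReach c S α β w a ∧ c v a ≠ α ∧ c v a ≠ β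
    · exact exists_not_avoidReach_insert_of_covered hsym hnr hvS hab hx₁ hy₁ hsep hcov
    push Not at hcov
    obtain ⟨w, hw, hcol⟩ := hcov
    refine ⟨α, β, hab, w, Finset.mem_insert_of_mem hw, v, Finset.mem_insert_self _ _,
      not_avoidReach_insert hvS hw fun a ha hwa => ?_⟩
    rw [hsym a v]
    by_cases h : c v a = α
    exacts [.inl h, .inr (hcol a ha hwa h)]

end Gallai

section Decomposition

variable {c : V → V → ℕ}

lemma exists_label_avoidReach (hsym : ∀ u v, c u v = c v u) {e : V → ℕ}
    (he : Function.Injective e) (S : Finset V) (α β : ℕ) :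
    ∃ κ : V → ℕ, (∀ x ∈ S, ∀ y ∈ S, κ x = κ y ↔ AvoidReach c S α β x y) ∧
      ∀ x ∈ S, ∃ p, AvoidReach c S α β x p ∧ e p = κ x := by
  classical
  set R := AvoidReach c S α β
  let κ x := {y ∈ S | R x y}.sup e
  have hrep : ∀ x ∈ S, ∃ p, R x p ∧ e p = κ x := fun x hx => by
    have hx' : x ∈ {y ∈ S | R x y} := Finset.mem_filter.2 ⟨hx, Relation.ReflTransGen.refl⟩
    obtain ⟨p, hp, hpe⟩ := Finset.exists_mem_eq_sup _ ⟨x, hx'⟩ e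
    exact ⟨p, (Finset.mem_filter.1 hp).2, hpe.symm⟩
  refine ⟨κ, fun x hx y hy => ⟨fun h => ?_, fun h => ?_⟩, hrep⟩
  · obtain ⟨p, hxp, hp⟩ := hrep x hx
    obtain ⟨q, hyq, hq⟩ := hrep y hy
    obtain rfl : p = q := he (by rw [hp, hq, h])
    exact hxp.trans (hyq.symm hsym)
  · simp only [κ]
    congr 1
    ext z
    simp only [Finset.mem_filter]
    exact and_congr_right fun _ => ⟨(h.symm hsym).trans, h.trans⟩

theorem exists_isModularColorOrderOn (hsym : ∀ u v, c u v = c v u)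
    (hnr : ¬ HasRainbowTriangle c)
    (he : ∀ α, ∃ e : V → ℕ, Function.Injective e ∧ IsTransitiveAlong (monoEdge c α) e)
    (S : Finset V) (hS : 2 ≤ S.card) :
    ∃ κ : V → ℕ, (∀ x ∈ S, ∃ w ∈ S, κ w ≠ κ x) ∧ IsModularColorOrderOn c S κ := by
  obtain ⟨α, β, -, x₀, hx₀, y₀, hy₀, hsep⟩ := exists_not_avoidReach hsym hnr S hS
  obtain ⟨e, he_inj, he⟩ := he α
  set R := AvoidReach c S α β
  obtain ⟨κ, hκ, hrep⟩ := exists_label_avoidReach hsym he_inj S α β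
  refine ⟨κ, fun x hx => ?_, fun x hx y hy z hz hxy hxz => ?_,
    fun x hx y hy z hz hxy hyz => ?_⟩
  · by_cases h : R x x₀
    · exact ⟨y₀, hy₀, fun h' => hsep ((h.symm hsym).trans ((hκ x hx y₀ hy₀).1 h'.symm))⟩
    · exact ⟨x₀, hx₀, fun h' => h ((hκ x hx x₀ hx₀).1 h'.symm)⟩
  · exact ((hκ x hx y hy).1 hxy).color_eq hsym hnr (fun h => hxz ((hκ x hx z hz).2 h)) hz
  · obtain ⟨p, hxp, hp⟩ := hrep x hx
    obtain ⟨q, hyq, hq⟩ := hrep y hy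
    obtain ⟨r, hzr, hr⟩ := hrep z hz
    have hnR : ∀ {u}, u ∈ S → ∀ {w}, w ∈ S → κ u < κ w → ¬ R u w :=
      fun hu _ hw h h' => h.ne ((hκ _ hu _ hw).2 h')
    have hxz := hxy.trans hyz
    rw [hxp.color_eq_color hsym hnr hx hy hyq (hnR hx hy hxy),
      hyq.color_eq_color hsym hnr hy hz hzr (hnR hy hz hyz),
      hxp.color_eq_color hsym hnr hx hz hzr (hnR hx hz hxz)]
    have hmem : ∀ {u u' w w'}, u ∈ S → w ∈ S → R u u' → R w w' → κ u < κ w →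
        c u' w' = α ∨ c u' w' = β := fun hu hw huu' hww' h => by
      rw [← huu'.color_eq_color hsym hnr hu hw hww' (hnR hu hw h)]
      exact color_mem_of_not_avoidReach hu hw (hnR hu hw h)
    exact he.color_eq_or_color_eq (fun h => hxy.ne (by rw [← hp, ← hq, h]))
      (fun h => hyz.ne (by rw [← hq, ← hr, h])) (fun h => hxz.ne (by rw [← hp, ← hr, h]))
      (by rwa [hp, hq]) (by rwa [hq, hr]) (hmem hx hy hxp hyq hxy) (hmem hy hz hyq hzr hyz)
      (hmem hx hz hxp hzr hxz)

theorem exists_isColorOrderOn (hsym : ∀ u v, c u v = c v u) (hnr : ¬ HasRainbowTriangle c)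
    (he : ∀ α, ∃ e : V → ℕ, Function.Injective e ∧ IsTransitiveAlong (monoEdge c α) e)
    (S : Finset V) : ∃ f : V → List ℕ, IsColorOrderOn c S f := by
  induction S using Finset.strongInduction with
  | H S ih =>
  rcases lt_or_ge S.card 2 with hS | hS
  · exact ⟨fun _ => [], fun x hx y hy _ => Finset.card_le_one.1 (by omega) x hx y hy,
      fun _ _ _ _ _ _ h => absurd h (lt_irrefl _)⟩
  obtain ⟨κ, hκ, hmod⟩ := exists_isModularColorOrderOn hsym hnr he S hS
  choose! g hg using ih
  refine ⟨_, hmod.isColorOrderOn_cons hsym (g := fun n => g {y ∈ S | κ y = n}) fun x hx =>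
    hg _ (Finset.filter_ssubset.2 (hκ x hx))⟩

end Decomposition

end

theorem stmt1_general {V : Type*} [Fintype V] (k : ℕ) (c : V → V → ℕ)
    (hc : IsCompleteColoring k c)
    (hmono : ∀ i ∈ Finset.Icc 1 k,
      ∃ (ℓᵢ : V ≃ Fin (Fintype.card V)) (πᵢ : Equiv.Perm (Fin (Fintype.card V))),
        IsPermGraph (monoEdge c i) ℓᵢ πᵢ)
    (hnr : ¬ HasRainbowTriangle c) :
    ∃ (ℓ : V ≃ Fin (Fintype.card V)) (π : ℕ → Equiv.Perm (Fin (Fintype.card V))),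
      ∀ i ∈ Finset.Icc 1 k, IsPermGraph (monoEdge c i) ℓ (π i) := by
  have hsym := hc.1
  have he (α : ℕ) :
      ∃ e : V → ℕ, Function.Injective e ∧ IsTransitiveAlong (monoEdge c α) e := by
    by_cases hα : α ∈ Finset.Icc 1 k
    · obtain ⟨ℓ, π, h⟩ := hmono α hα
      exact ⟨fun x => (ℓ x : ℕ), Fin.val_injective.comp ℓ.injective, h.isTransitiveAlong⟩
    · have hE (u v : V) : ¬ monoEdge c α u v := fun h => hα (h.2 ▸ hc.2.1 u v h.1)
      exact ⟨fun x => (Fintype.equivFin V x : ℕ),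
        Fin.val_injective.comp (Fintype.equivFin V).injective,
        fun x y z _ _ => ⟨fun h => (hE x y h).elim, fun _ _ => hE x z⟩⟩
  obtain ⟨f, hf_inj, hf⟩ := exists_isColorOrderOn hsym hnr he Finset.univ
  obtain ⟨ℓ, hℓ⟩ := exists_equiv_fin_of_injective (Set.injOn_univ.1 (by simpa using hf_inj))
  choose π hπ using fun i => exists_isPermGraph_of_isTransitiveAlong (monoEdge_symm hsym i)
    (fun u h => h.1 rfl) ((IsColorOrderOn.isTransitiveAlong_monoEdge ⟨hf_inj, hf⟩ i).of_lt_iff hℓ)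
  exact ⟨ℓ, π, fun i _ => hπ i⟩

/-- If every monochromatic subgraph of the complete `k`-edge-colored
graph `G` is a simple permutation graph (each possibly with its own labeling) and `G`
has no rainbow triangle, then there are a single labeling `ℓ` and permutations
`π_1,…,π_k` making `(G,ℓ)` a complete `k`-edge-colored permutation graph. -/
theorem stmt1 {V : Type*} [Fintype V] [Nonempty V] (k : ℕ) (c : V → V → ℕ)
    (hc : IsCompleteColoring k c)
    (hmono : ∀ i ∈ Finset.Icc 1 k,
      ∃ (ℓᵢ : V ≃ Fin (Fintype.card V)) (πᵢ : Equiv.Perm (Fin (Fintype.card V))),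
        IsPermGraph (monoEdge c i) ℓᵢ πᵢ)
    (hnr : ¬ HasRainbowTriangle c) :
    ∃ (ℓ : V ≃ Fin (Fintype.card V)) (π : ℕ → Equiv.Perm (Fin (Fintype.card V))),
      ∀ i ∈ Finset.Icc 1 k, IsPermGraph (monoEdge c i) ℓ (π i) :=
  stmt1_general k c hc hmono hnr
end

section
/- If G=(V,c) is a complete edge-colored permutation graph, then for every non-empty subset M ⊆ V the induced subgraph G[M] (the complete edge-colored graph on M whose edge colors are inherited from G) is a complete edge-colored permutation graph. Hence the property of being a complete edge-colored permutation graph is hereditary. -/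

lemma exists_order_equiv {W : Type*} [Fintype W] {n : ℕ} (f : W → Fin n)
    (hf : Function.Injective f) :
    ∃ g : W ≃ Fin (Fintype.card W), ∀ x y, g x < g y ↔ f x < f y := by
  letI : LinearOrder W := LinearOrder.lift' f hf
  refine ⟨(monoEquivOfFin W rfl).symm.toEquiv, fun x y => ?_⟩
  have h1 : (monoEquivOfFin W rfl).symm x < (monoEquivOfFin W rfl).symm y ↔ x < y :=
    (monoEquivOfFin W rfl).symm.lt_iff_lt
  have h2 : x < y ↔ f x < f y := by
    constructor
    · intro hxy
      rcases lt_iff_le_and_ne.mp hxy with ⟨hle, hne⟩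
      exact lt_of_le_of_ne hle (fun e => hne (hf e))
    · intro hxy
      exact lt_of_le_of_ne (le_of_lt hxy) (fun e => absurd (congrArg f e) (ne_of_lt hxy))
  exact h1.trans h2

/-- If `G = (V,c)` is a complete edge-colored permutation graph, then for
every non-empty `M ⊆ V` the induced subgraph `G[M]` (with colors inherited from `G`)
is a complete edge-colored permutation graph; the property is hereditary. -/
theorem stmt2 {V : Type*} [Fintype V] [Nonempty V] (k : ℕ) (c : V → V → ℕ)
    (hc : IsCompleteColoring k c) (h : IsCECPG c)
    (M : Finset V) (hM : M.Nonempty) :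
    IsCECPG (fun u v : {x // x ∈ M} => c u.1 v.1) := by
  obtain ⟨ℓ, π, hπ⟩ := h
  obtain ⟨ℓ', hℓ'⟩ := exists_order_equiv (fun x : {x // x ∈ M} => ℓ x.1)
    (fun a b hab => Subtype.ext (ℓ.injective hab))
  choose g hg using fun i : ℕ => exists_order_equiv
    (fun x : {x // x ∈ M} => (π i)⁻¹ (ℓ x.1))
    (fun a b hab => Subtype.ext (ℓ.injective ((π i)⁻¹.injective hab)))
  refine ⟨ℓ', fun i => (ℓ'.symm.trans (g i))⁻¹, fun i u v => ?_⟩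
  have key : monoEdge c i u.1 v.1 ↔ monoEdge (fun u v : {x // x ∈ M} => c u.1 v.1) i u v := by
    constructor
    · rintro ⟨hne, hc⟩; exact ⟨fun e => hne (congrArg Subtype.val e), hc⟩
    · rintro ⟨hne, hc⟩; exact ⟨fun e => hne (Subtype.ext e), hc⟩
  have hinv : ∀ w : {x // x ∈ M},
      ((ℓ'.symm.trans (g i))⁻¹)⁻¹ (ℓ' w) = g i w := by
    intro w
    simp [Equiv.Perm.inv_def]
  rw [← key, hπ i u.1 v.1]
  rw [hinv u, hinv v, hg i u v, hg i v u, hℓ' u v, hℓ' v u]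
end

section
/- If a complete edge-colored graph G contains a rainbow triangle, then G is not a complete edge-colored permutation graph, i.e., for no labeling ℓ of G and no permutations π_1,…,π_k is (G,ℓ) a complete k-edge-colored permutation graph of π_1,…,π_k. -/
/-!
In a permutation graph, an edge `a d` between labels `ℓ a < ℓ d` is an inversion of `π`, and for
any `b` with label in between, `a b` or `b d` must be an inversion too. Order the vertices of a
rainbow triangle by label as `a, b, d` and apply this to the permutation graph of the color of
`a d`: one of `a b`, `b d` gets the same color as `a d`, so the triangle is not rainbow.
-/

theorem IsPermGraph.adj_or_adj_of_lt {V : Type*} {n : ℕ} {E : V → V → Prop} {ℓ : V ≃ Fin n}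
    {π : Equiv.Perm (Fin n)} (h : IsPermGraph E ℓ π) {a b d : V} (hab : ℓ a < ℓ b)
    (hbd : ℓ b < ℓ d) (had : E a d) : E a b ∨ E b d := by
  have hinv : π⁻¹ (ℓ d) < π⁻¹ (ℓ a) := by
    rcases (h a d).1 had with ⟨hda, -⟩ | ⟨-, hinv⟩
    · exact absurd (hab.trans hbd) hda.asymm
    · exact hinv
  rcases lt_or_ge (π⁻¹ (ℓ b)) (π⁻¹ (ℓ a)) with hba | hab'
  · exact .inl <| (h a b).2 <| .inr ⟨hab, hba⟩
  · exact .inr <| (h b d).2 <| .inr ⟨hbd, hinv.trans_le hab'⟩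

theorem exists_lt_lt_of_symmetric {α β : Type*} [LinearOrder β] (f : α → β)
    (P : α → α → α → Prop) (swap₁₂ : ∀ a b d, P a b d → P b a d)
    (swap₂₃ : ∀ a b d, P a b d → P a d b) {x y z : α} (hxy : f x ≠ f y) (hxz : f x ≠ f z)
    (hyz : f y ≠ f z) (h : P x y z) : ∃ a b d, P a b d ∧ f a < f b ∧ f b < f d := by
  rcases hxy.lt_or_gt with hxy | hxy <;> rcases hxz.lt_or_gt with hxz | hxz <;>
    rcases hyz.lt_or_gt with hyz | hyz
  · exact ⟨x, y, z, h, hxy, hyz⟩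
  · exact ⟨x, z, y, swap₂₃ _ _ _ h, hxz, hyz⟩
  · exact absurd (hxy.trans hyz) hxz.asymm
  · exact ⟨z, x, y, swap₁₂ _ _ _ (swap₂₃ _ _ _ h), hxz, hxy⟩
  · exact ⟨y, x, z, swap₁₂ _ _ _ h, hxy, hxz⟩
  · exact absurd (hyz.trans hxy) hxz.not_gt
  · exact ⟨y, z, x, swap₂₃ _ _ _ (swap₁₂ _ _ _ h), hyz, hxz⟩
  · exact ⟨z, y, x, swap₁₂ _ _ _ (swap₂₃ _ _ _ (swap₁₂ _ _ _ h)), hyz, hxy⟩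

section Rainbow

variable {V : Type*} {c : V → V → ℕ}

def IsRainbow (c : V → V → ℕ) (a b d : V) : Prop :=
  c a b ≠ c a d ∧ c a b ≠ c b d ∧ c a d ≠ c b d

theorem IsRainbow.swap₁₂ (hsymm : ∀ u v, c u v = c v u) {a b d : V}
    (h : IsRainbow c a b d) : IsRainbow c b a d := by
  obtain ⟨h₁, h₂, h₃⟩ := h
  rw [IsRainbow, hsymm b a]
  exact ⟨h₂, h₁, h₃.symm⟩

theorem IsRainbow.swap₂₃ (hsymm : ∀ u v, c u v = c v u) {a b d : V}
    (h : IsRainbow c a b d) : IsRainbow c a d b := by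
  obtain ⟨h₁, h₂, h₃⟩ := h
  rw [IsRainbow, hsymm d b]
  exact ⟨h₁.symm, h₃, h₂⟩

end Rainbow

theorem stmt3_general {V : Type*} [Fintype V] (k : ℕ) (c : V → V → ℕ)
    (hc : IsCompleteColoring k c) (hrb : HasRainbowTriangle c) :
    ∀ (ℓ : V ≃ Fin (Fintype.card V)) (π : ℕ → Equiv.Perm (Fin (Fintype.card V))),
      ¬ (∀ i ∈ Finset.Icc 1 k, IsPermGraph (monoEdge c i) ℓ (π i)) := by
  intro ℓ π hperm
  obtain ⟨hsymm, hcolor, -⟩ := hc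
  obtain ⟨u, v, w, huv, huw, hvw, hrainbow⟩ := hrb
  obtain ⟨a, b, d, ⟨hab, hbd, had⟩, hlab, hlbd⟩ :=
    exists_lt_lt_of_symmetric ℓ (IsRainbow c) (fun _ _ _ ↦ IsRainbow.swap₁₂ hsymm)
      (fun _ _ _ ↦ IsRainbow.swap₂₃ hsymm) (ℓ.injective.ne huv) (ℓ.injective.ne huw)
      (ℓ.injective.ne hvw) hrainbow
  have hne : a ≠ d := fun h ↦ (hlab.trans hlbd).ne (congrArg ℓ h)
  rcases (hperm _ (hcolor a d hne)).adj_or_adj_of_lt hlab hlbd ⟨hne, rfl⟩ with h | h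
  · exact hab h.2
  · exact had h.2.symm

/-- If a complete `k`-edge-colored graph `G` contains a rainbow triangle,
then for no labeling `ℓ` and no permutations `π_1,…,π_k` is `(G,ℓ)` a complete
`k`-edge-colored permutation graph of `π_1,…,π_k`. -/
theorem stmt3 {V : Type*} [Fintype V] [Nonempty V] (k : ℕ) (c : V → V → ℕ)
    (hc : IsCompleteColoring k c) (hrb : HasRainbowTriangle c) :
    ∀ (ℓ : V ≃ Fin (Fintype.card V)) (π : ℕ → Equiv.Perm (Fin (Fintype.card V))),
      ¬ (∀ i ∈ Finset.Icc 1 k, IsPermGraph (monoEdge c i) ℓ (π i)) :=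
  stmt3_general k c hc hrb
end

section
/- Let G be a complete k-edge-colored graph, ℓ a labeling of G, and u,v,w three distinct vertices with ℓ(u)<ℓ(v)<ℓ(w). If the edges {u,v} and {v,w} have the same color and this color differs from the color of the edge {u,w}, then there exist no permutations π_1,…,π_k such that (G,ℓ) is a complete k-edge-colored permutation graph of π_1,…,π_k. -/
/-- If `u,v,w` are distinct vertices with `ℓ(u) < ℓ(v) < ℓ(w)` such that
the edges `{u,v}` and `{v,w}` have the same color which differs from the color of
`{u,w}`, then no permutations `π_1,…,π_k` make `(G,ℓ)` a complete `k`-edge-colored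
permutation graph. -/
theorem stmt4 {V : Type*} [Fintype V] (k : ℕ) (c : V → V → ℕ)
    (hc : IsCompleteColoring k c) (ℓ : V ≃ Fin (Fintype.card V))
    (u v w : V) (huv : u ≠ v) (huw : u ≠ w) (hvw : v ≠ w)
    (hℓ1 : ℓ u < ℓ v) (hℓ2 : ℓ v < ℓ w)
    (hcol : c u v = c v w) (hne : c u v ≠ c u w) :
    ∀ π : ℕ → Equiv.Perm (Fin (Fintype.card V)),
      ¬ (∀ i ∈ Finset.Icc 1 k, IsPermGraph (monoEdge c i) ℓ (π i)) := by
  intro π h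
  obtain ⟨hsym, hmem, -⟩ := hc
  set i := c u v with hi
  have hiIcc : i ∈ Finset.Icc 1 k := hmem u v huv
  have hP := h i hiIcc
  have h1 : (π i)⁻¹ (ℓ v) < (π i)⁻¹ (ℓ u) := by
    have := (hP u v).mp ⟨huv, rfl⟩
    rcases this with ⟨h', _⟩ | ⟨_, h'⟩
    · exact absurd hℓ1 (not_lt.mpr h'.le)
    · exact h'
  have h2 : (π i)⁻¹ (ℓ w) < (π i)⁻¹ (ℓ v) := by
    have := (hP v w).mp ⟨hvw, hcol.symm⟩
    rcases this with ⟨h', _⟩ | ⟨_, h'⟩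
    · exact absurd hℓ2 (not_lt.mpr h'.le)
    · exact h'
  have h3 : monoEdge c i u w :=
    (hP u w).mpr (Or.inr ⟨hℓ1.trans hℓ2, h2.trans h1⟩)
  exact hne h3.2.symm
end

section
/- Let k ≥ 3 and let G be a complete k-edge-colored graph. If G is primitive (its only modules are the trivial ones), then G contains a rainbow triangle. -/
/-- `M` is a module of the complete edge-colored graph with coloring `c`. -/
def IsModule {V : Type*} (c : V → V → ℕ) (M : Set V) : Prop :=
  ∀ u ∈ M, ∀ w ∈ M, ∀ v ∉ M, c u v = c w v

/-- The coloring `c` is primitive: its only modules are the trivial ones. -/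
def IsPrimitive {V : Type*} (c : V → V → ℕ) : Prop :=
  ∀ M : Set V, IsModule c M → M = ∅ ∨ M = Set.univ ∨ ∃ x : V, M = {x}


/-! Without rainbow triangles, a vertex outside a monochromatic component sees both ends of
each of its edges in the same colour, so monochromatic components are modules; in a primitive
graph each of the colours `1, 2, 3` therefore spans a connected graph on all vertices.

Three such colours cannot live on a finite vertex set: a vertex `v` sees all three, and deleting
`v` leaves each of them connected. Indeed, if deleting `v` split colour `i`, a vertex that `v` sees
in a colour `j ≠ i` would see, in colour `j`, every `i`-neighbour of `v` outside its own
`i`-component; comparing two vertices that `v` sees in distinct colours `j, k ≠ i` through these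
components, which are modules, forces `j = k`. Induction on the vertex set finishes the proof. -/

namespace EdgeColoring

open Relation

variable {V : Type*} {c : V → V → ℕ} {i : ℕ} {s : Finset V} {v : V}

def colorStep (c : V → V → ℕ) (i : ℕ) (s : Finset V) (a b : V) : Prop :=
  a ∈ s ∧ b ∈ s ∧ monoEdge c i a b

abbrev ColorReach (c : V → V → ℕ) (i : ℕ) (s : Finset V) : V → V → Prop :=
  ReflTransGen (colorStep c i s)

def ColorConnected (c : V → V → ℕ) (i : ℕ) (s : Finset V) : Prop :=
  (∃ a ∈ s, ∃ b ∈ s, monoEdge c i a b) ∧ ∀ x ∈ s, ∀ y ∈ s, ColorReach c i s x y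

theorem color_eq_of_not_hasRainbowTriangle (hrf : ¬ HasRainbowTriangle c) {a b y : V}
    (hab : a ≠ b) (hay : a ≠ y) (hby : b ≠ y) (hab_i : c a b = i) (hay_i : c a y ≠ i)
    (hby_i : c b y ≠ i) : c a y = c b y := by
  by_contra hne
  exact hrf ⟨a, b, y, hab, hay, hby, hab_i ▸ hay_i.symm, hab_i ▸ hby_i.symm, hne⟩

theorem ColorReach.symm (hsym : ∀ u v, c u v = c v u) {x y : V}
    (h : ColorReach c i s x y) : ColorReach c i s y x :=
  ReflTransGen.mono (fun _ _ ⟨hb, ha, hne, hba⟩ => ⟨ha, hb, hne.symm, (hsym _ _).trans hba⟩)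
    _ _ (reflTransGen_swap.mpr h)

theorem ColorReach.exists_monoEdge {x y : V} (h : ColorReach c i s x y) (hxy : x ≠ y) :
    ∃ z ∈ s, monoEdge c i x z := by
  obtain rfl | ⟨z, ⟨-, hz, hxz⟩, -⟩ := h.cases_head
  · exact absurd rfl hxy
  · exact ⟨z, hz, hxz⟩

theorem ColorConnected.exists_monoEdge (h : ColorConnected c i s) {x : V} (hx : x ∈ s) :
    ∃ y ∈ s, monoEdge c i x y := by
  obtain ⟨⟨a, ha, b, hb, hab, -⟩, hconn⟩ := h
  by_cases hxa : x = a
  · exact (hconn x hx b hb).exists_monoEdge (hxa ▸ hab)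
  · exact (hconn x hx a ha).exists_monoEdge hxa

theorem color_eq_of_colorReach (hrf : ¬ HasRainbowTriangle c) {u w y : V}
    (huw : ColorReach c i s u w) (hy : y ∈ s) (hny : ¬ ColorReach c i s u y) :
    c u y = c w y := by
  induction huw with
  | refl => rfl
  | @tail a b hua hab ih =>
    obtain ⟨ha, hb, hne, hab_i⟩ := hab
    have hna : ¬ colorStep c i s a y := fun h => hny (hua.tail h)
    have hnb : ¬ colorStep c i s b y := fun h => hny ((hua.tail ⟨ha, hb, hne, hab_i⟩).tail h)
    have hay : a ≠ y := by rintro rfl; exact hny hua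
    have hby : b ≠ y := by rintro rfl; exact hny (hua.tail ⟨ha, hb, hne, hab_i⟩)
    refine ih.trans (color_eq_of_not_hasRainbowTriangle hrf hne hay hby hab_i ?_ ?_)
    · exact fun h => hna ⟨ha, hy, hay, h⟩
    · exact fun h => hnb ⟨hb, hy, hby, h⟩

theorem colorConnected_univ_of_isPrimitive [Fintype V] (hsym : ∀ u v, c u v = c v u)
    (hrf : ¬ HasRainbowTriangle c) (hprim : IsPrimitive c) {x x' : V}
    (hxx' : monoEdge c i x x') : ColorConnected c i Finset.univ := by
  set M : Set V := {y | ColorReach c i Finset.univ x y}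
  have hmod : IsModule c M := fun u hu w hw y hy =>
    (color_eq_of_colorReach hrf hu (Finset.mem_univ y) hy).symm.trans
      (color_eq_of_colorReach hrf hw (Finset.mem_univ y) hy)
  have hx : x ∈ M := ReflTransGen.refl
  have hx' : x' ∈ M := .single ⟨Finset.mem_univ _, Finset.mem_univ _, hxx'⟩
  refine ⟨⟨x, Finset.mem_univ _, x', Finset.mem_univ _, hxx'⟩, fun y _ z _ => ?_⟩
  obtain hM | hM | ⟨z, hM⟩ := hprim M hmod
  · rw [hM] at hx
    exact hx.elim
  · have hreach : ∀ y, y ∈ M := fun y => by rw [hM]; trivial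
    exact ((hreach y).symm hsym).trans (hreach z)
  · rw [hM, Set.mem_singleton_iff] at hx hx'
    exact absurd (hx.trans hx'.symm) hxx'.1

theorem exists_colorReach_erase [DecidableEq V] {z : V} (h : ColorReach c i s z v)
    (hz : z ∈ s.erase v) :
    ∃ w ∈ s.erase v, ColorReach c i (s.erase v) z w ∧ c w v = i := by
  induction h using ReflTransGen.head_induction_on with
  | refl => exact absurd rfl (Finset.ne_of_mem_erase hz)
  | @head a b hab _ ih =>
    obtain ⟨-, hb, hne, hab_i⟩ := hab
    by_cases hbv : b = v
    · exact ⟨a, hz, .refl, hbv ▸ hab_i⟩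
    · have hb' : b ∈ s.erase v := Finset.mem_erase.mpr ⟨hbv, hb⟩
      obtain ⟨w, hw, hbw, hwv⟩ := ih hb'
      exact ⟨w, hw, hbw.head ⟨hz, hb', hne, hab_i⟩, hwv⟩

theorem color_eq_of_not_colorReach (hsym : ∀ u v, c u v = c v u) (hrf : ¬ HasRainbowTriangle c)
    {t : Finset V} {p q : V} (hpv : p ≠ v) (hqv : q ≠ v) (hp : p ∈ t) (hq : q ∈ t)
    (hqv_i : c q v = i) (hvp : c v p ≠ i) (hpq : ¬ ColorReach c i t p q) : c p q = c v p := by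
  have hpq_ne : p ≠ q := by rintro rfl; exact hpq .refl
  have hpq_i : c q p ≠ i := fun h => hpq (.single ⟨hp, hq, hpq_ne, (hsym p q).trans h⟩)
  rw [hsym p q]
  exact color_eq_of_not_hasRainbowTriangle hrf hqv hpq_ne.symm hpv.symm hqv_i hpq_i hvp

theorem ColorConnected.erase [DecidableEq V] (hsym : ∀ u v, c u v = c v u)
    (hrf : ¬ HasRainbowTriangle c) (h : ColorConnected c i s) (hv : v ∈ s) {u u' : V}
    (hu : u ∈ s.erase v) (hu' : u' ∈ s.erase v) (hvu : c v u ≠ i) (hvu' : c v u' ≠ i)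
    (hne : c v u ≠ c v u') : ColorConnected c i (s.erase v) := by
  set t := s.erase v
  have hnbr : ∀ z ∈ t, ∃ w ∈ t, ColorReach c i t z w ∧ c w v = i := fun z hz =>
    exists_colorReach_erase (h.2 z (Finset.mem_of_mem_erase hz) v hv) hz
  have htransfer : ∀ p ∈ t, ∀ q ∈ t, c q v = i → c v p ≠ i → ¬ ColorReach c i t p q →
      c p q = c v p := fun p hp q hq =>
    color_eq_of_not_colorReach hsym hrf (Finset.ne_of_mem_erase hp) (Finset.ne_of_mem_erase hq)
      hp hq
  -- Otherwise `i`-neighbours `w ~ u` and `w' ~ u'` of `v` give `c v u = c w w' = c v u'`.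
  have huu' : ColorReach c i t u u' := by
    by_contra huu'
    obtain ⟨w, hw, huw, hwv⟩ := hnbr u hu
    obtain ⟨w', hw', hu'w', hw'v⟩ := hnbr u' hu'
    have huw' : ¬ ColorReach c i t u w' := fun h' => huu' (h'.trans (hu'w'.symm hsym))
    have hu'w : ¬ ColorReach c i t u' w := fun h' =>
      huu' (ColorReach.symm hsym (h'.trans (huw.symm hsym)))
    apply hne
    rw [← htransfer u hu w' hw' hw'v hvu huw', ← htransfer u' hu' w hw hwv hvu' hu'w,
      color_eq_of_colorReach hrf huw hw' huw', color_eq_of_colorReach hrf hu'w' hw hu'w, hsym]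
  refine ⟨?_, fun x hx y hy => ?_⟩
  · obtain ⟨z, hz, huz⟩ := huu'.exists_monoEdge (fun h' => hne (h' ▸ rfl))
    exact ⟨u, hu, z, hz, huz⟩
  by_contra hxy
  obtain ⟨z, hz, hzv, huz⟩ : ∃ z ∈ t, c z v = i ∧ ¬ ColorReach c i t u z := by
    by_contra! H
    obtain ⟨wx, hwx, hxwx, hwxv⟩ := hnbr x hx
    obtain ⟨wy, hwy, hywy, hwyv⟩ := hnbr y hy
    exact hxy (((hxwx.trans ((H wx hwx hwxv).symm hsym)).trans (H wy hwy hwyv)).trans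
      (hywy.symm hsym))
  have hu'z : ¬ ColorReach c i t u' z := fun h' => huz (huu'.trans h')
  apply hne
  rw [← htransfer u hu z hz hzv hvu huz, ← htransfer u' hu' z hz hzv hvu' hu'z]
  exact color_eq_of_colorReach hrf huu' hz huz

theorem not_colorConnected_three [DecidableEq V] (hsym : ∀ u v, c u v = c v u)
    (hrf : ¬ HasRainbowTriangle c) {i₁ i₂ i₃ : ℕ} (h₁₂ : i₁ ≠ i₂) (h₁₃ : i₁ ≠ i₃)
    (h₂₃ : i₂ ≠ i₃) (s : Finset V) (h₁ : ColorConnected c i₁ s) (h₂ : ColorConnected c i₂ s)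
    (h₃ : ColorConnected c i₃ s) : False := by
  induction s using Finset.strongInduction with
  | H s ih =>
  obtain ⟨v, hv, -⟩ := h₁.1
  obtain ⟨u₁, hu₁, hvu₁, rfl⟩ := h₁.exists_monoEdge hv
  obtain ⟨u₂, hu₂, hvu₂, rfl⟩ := h₂.exists_monoEdge hv
  obtain ⟨u₃, hu₃, hvu₃, rfl⟩ := h₃.exists_monoEdge hv
  have hu₁' := Finset.mem_erase.mpr ⟨hvu₁.symm, hu₁⟩
  have hu₂' := Finset.mem_erase.mpr ⟨hvu₂.symm, hu₂⟩
  have hu₃' := Finset.mem_erase.mpr ⟨hvu₃.symm, hu₃⟩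
  exact ih _ (Finset.erase_ssubset hv)
    (h₁.erase hsym hrf hv hu₂' hu₃' h₁₂.symm h₁₃.symm h₂₃)
    (h₂.erase hsym hrf hv hu₁' hu₃' h₁₂ h₂₃.symm h₁₃)
    (h₃.erase hsym hrf hv hu₁' hu₂' h₁₃ h₂₃ h₁₂)

end EdgeColoring

theorem stmt5_general {V : Type*} [Fintype V] (k : ℕ) (hk : 3 ≤ k)
    (c : V → V → ℕ) (hc : IsCompleteColoring k c) (hprim : IsPrimitive c) :
    HasRainbowTriangle c := by
  classical
  by_contra hrf
  obtain ⟨hsym, -, hall⟩ := hc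
  have hconn : ∀ l ∈ Finset.Icc 1 k, EdgeColoring.ColorConnected c l Finset.univ := fun l hl =>
    let ⟨_, _, huv, huv_l⟩ := hall l hl
    EdgeColoring.colorConnected_univ_of_isPrimitive hsym hrf hprim ⟨huv, huv_l⟩
  exact EdgeColoring.not_colorConnected_three hsym hrf (by decide : 1 ≠ 2) (by decide : 1 ≠ 3)
    (by decide : 2 ≠ 3) Finset.univ (hconn 1 (by simp; omega)) (hconn 2 (by simp; omega))
    (hconn 3 (by simp; omega))

/-- Every primitive complete `k`-edge-colored graph with `k ≥ 3`
contains a rainbow triangle. -/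
theorem stmt5 {V : Type*} [Fintype V] [Nonempty V] (k : ℕ) (hk : 3 ≤ k)
    (c : V → V → ℕ) (hc : IsCompleteColoring k c) (hprim : IsPrimitive c) :
    HasRainbowTriangle c :=
  stmt5_general k hk c hc hprim
end

section
/- For every complete k-edge-colored graph G with k ≥ 3 that does not contain a rainbow triangle, there exists a color i ∈ {1,…,k} such that the i-th monochromatic subgraph G_{|i} (the graph on the full vertex set V whose edges are the pairs of color i) is disconnected. -/
/-- The `i`-th monochromatic subgraph `G_{|i}` as a simple graph on `V`. -/
def monoGraph {V : Type*} (c : V → V → ℕ) (hs : ∀ u v : V, c u v = c v u) (i : ℕ) :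
    SimpleGraph V where
  Adj u v := u ≠ v ∧ c u v = i
  symm := by
    constructor
    intro u v h
    exact ⟨h.1.symm, (hs v u).trans h.2⟩
  loopless := by
    constructor
    intro u h
    exact h.1 rfl

/-!
Suppose three colors `a`, `b`, `j` all have connected color classes; by induction on the number
of vertices we show that there is only one vertex. The key fact is that deleting a vertex `v`
keeps the `j`-class connected. Otherwise, since there is no rainbow triangle, a vertex outside a
`j`-component of `G - v` sees the whole component in a single color; as `G_{|j}` is connected,
every such component contains a `j`-neighbour of `v`, so a vertex `z` with `c v z ≠ j` sees all
other components in the color `c v z`. Comparing an `a`-neighbour and a `b`-neighbour of `v`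
then forces `a = b`. Hence the induction hypothesis applies to `G - v`, which is therefore a single
vertex, joined to `v` in both colors `a` and `b`.
-/

section Gallai

open SimpleGraph

variable {V : Type*} {c : V → V → ℕ} (hs : ∀ u v : V, c u v = c v u)

theorem eq_of_not_hasRainbowTriangle (hnr : ¬ HasRainbowTriangle c) {u v w : V}
    (huv : u ≠ v) (huw : u ≠ w) (hvw : v ≠ w) (hv : c u v ≠ c v w) (hw : c u w ≠ c v w) :
    c u v = c u w := by
  by_contra h
  exact hnr ⟨u, v, w, huv, huw, hvw, h, hv, hw⟩

theorem not_hasRainbowTriangle_comp {W : Type*} {f : W → V} (hf : Function.Injective f)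
    (hnr : ¬ HasRainbowTriangle c) : ¬ HasRainbowTriangle (fun p q => c (f p) (f q)) := by
  rintro ⟨u, v, w, huv, huw, hvw, h⟩
  exact hnr ⟨f u, f v, f w, hf.ne huv, hf.ne huw, hf.ne hvw, h⟩

theorem monoGraph_restrict (s : Set V) (i : ℕ) :
    monoGraph (fun p q : s => c p q) (fun p q => hs p q) i = (monoGraph c hs i).induce s := by
  ext p q
  simp [monoGraph, Subtype.ext_iff]

theorem SimpleGraph.Reachable.exists_adj_of_mem_of_notMem {G : SimpleGraph V} {s : Set V}
    {z w : V} (h : G.Reachable z w) (hz : z ∈ s) (hw : w ∉ s) :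
    ∃ t : s, ∃ x ∉ s, (G.induce s).Reachable ⟨z, hz⟩ t ∧ G.Adj t x := by
  obtain ⟨p⟩ := h
  induction p with
  | nil => exact absurd hz hw
  | @cons z z₁ w hadj p ih =>
    by_cases hz₁ : z₁ ∈ s
    · obtain ⟨t, x, hx, hreach, htx⟩ := ih hz₁ hw
      have hadj' : (G.induce s).Adj ⟨z, hz⟩ ⟨z₁, hz₁⟩ := hadj
      exact ⟨t, x, hx, hadj'.reachable.trans hreach, htx⟩
    · exact ⟨⟨z, hz⟩, z₁, hz₁, Reachable.refl _, hadj⟩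

theorem ne_and_color_ne_of_not_reachable {s : Set V} {j : ℕ} {x y : s}
    (h : ¬ ((monoGraph c hs j).induce s).Reachable x y) : (x : V) ≠ y ∧ c x y ≠ j := by
  refine ⟨fun hxy => h (Subtype.ext hxy ▸ Reachable.refl _), fun hc => h (Adj.reachable ?_)⟩
  exact ⟨fun hxy => h (Subtype.ext hxy ▸ Reachable.refl _), hc⟩

theorem color_eq_of_reachable_induce (hnr : ¬ HasRainbowTriangle c) {s : Set V} {j : ℕ}
    {u z w : s} (hzw : ((monoGraph c hs j).induce s).Reachable z w)
    (huz : ¬ ((monoGraph c hs j).induce s).Reachable u z) : c u z = c u w := by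
  obtain ⟨p⟩ := hzw
  induction p with
  | nil => rfl
  | @cons z z₁ w hadj p ih =>
    have huz₁ : ¬ ((monoGraph c hs j).induce s).Reachable u z₁ :=
      fun h => huz (h.trans hadj.symm.reachable)
    obtain ⟨huz_ne, huz_col⟩ := ne_and_color_ne_of_not_reachable hs huz
    obtain ⟨huz₁_ne, huz₁_col⟩ := ne_and_color_ne_of_not_reachable hs huz₁
    rw [← ih huz₁]
    obtain ⟨hzz₁, hcol⟩ : (z : V) ≠ z₁ ∧ c z z₁ = j := hadj
    exact eq_of_not_hasRainbowTriangle hnr huz_ne huz₁_ne hzz₁ (hcol ▸ huz_col) (hcol ▸ huz₁_col)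

theorem color_eq_of_not_reachable_induce_compl (hnr : ¬ HasRainbowTriangle c) {j : ℕ}
    (hj : (monoGraph c hs j).Preconnected) {v : V} {z w : ({v}ᶜ : Set V)} (hvz : c v z ≠ j)
    (hzw : ¬ ((monoGraph c hs j).induce {v}ᶜ).Reachable z w) : c z w = c v z := by
  obtain ⟨t, x, hx, hwt, htx⟩ :=
    (hj w v).exists_adj_of_mem_of_notMem w.2 (Set.notMem_compl_iff.2 rfl)
  obtain rfl : v = x := (Set.notMem_compl_iff.1 hx).symm
  obtain ⟨-, htv⟩ : (t : V) ≠ v ∧ c t v = j := htx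
  have hzt : ¬ ((monoGraph c hs j).induce {v}ᶜ).Reachable z t := fun h => hzw (h.trans hwt.symm)
  obtain ⟨hzt_ne, hzt_col⟩ := ne_and_color_ne_of_not_reachable hs hzt
  calc c z w = c z t := (color_eq_of_reachable_induce hs hnr hwt.symm hzt).symm
    _ = c z v := eq_of_not_hasRainbowTriangle hnr hzt_ne z.2 t.2 (htv ▸ hzt_col)
        (htv ▸ hs z v ▸ hvz)
    _ = c v z := hs z v

theorem preconnected_induce_compl_singleton (hnr : ¬ HasRainbowTriangle c) {a b j : ℕ}
    (hab : a ≠ b) (haj : a ≠ j) (hbj : b ≠ j) (ha : (monoGraph c hs a).Preconnected)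
    (hb : (monoGraph c hs b).Preconnected) (hj : (monoGraph c hs j).Preconnected) (v : V) :
    ((monoGraph c hs j).induce {v}ᶜ).Preconnected := by
  set H := (monoGraph c hs j).induce {v}ᶜ
  by_contra hdisc
  obtain ⟨x, y, hxy⟩ : ∃ x y, ¬ H.Reachable x y := by
    simpa only [Preconnected, not_forall] using hdisc
  have : Nontrivial V := ⟨⟨x, v, x.2⟩⟩
  obtain ⟨z, hvz, hza⟩ := ha.exists_adj_of_nontrivial v
  obtain ⟨z', hvz', hzb⟩ := hb.exists_adj_of_nontrivial v
  let zs : ({v}ᶜ : Set V) := ⟨z, hvz.symm⟩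
  let zs' : ({v}ᶜ : Set V) := ⟨z', hvz'.symm⟩
  have hcol : ∀ {u w : ({v}ᶜ : Set V)}, c v u ≠ j → ¬ H.Reachable u w → c u w = c v u :=
    color_eq_of_not_reachable_induce_compl hs hnr hj
  by_cases hzz' : H.Reachable zs zs'
  · obtain ⟨w, hw⟩ : ∃ w, ¬ H.Reachable zs w := by
      by_contra! h
      exact hxy ((h x).symm.trans (h y))
    have h₁ : c z w = a := hza ▸ hcol (u := zs) (hza ▸ haj) hw
    have h₂ : c z' w = b := hzb ▸ hcol (u := zs') (hzb ▸ hbj) fun h => hw (hzz'.trans h)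
    have h₃ : c w z = c w z' := color_eq_of_reachable_induce hs hnr hzz' fun h => hw h.symm
    exact hab (by rw [← h₁, ← h₂, hs, h₃, hs])
  · have h₁ : c z z' = a := hza ▸ hcol (u := zs) (hza ▸ haj) hzz'
    have h₂ : c z' z = b := hzb ▸ hcol (u := zs') (hzb ▸ hbj) fun h => hzz' h.symm
    exact hab (by rw [← h₁, ← h₂, hs])

theorem subsingleton_of_preconnected_monoGraph [Finite V] (hnr : ¬ HasRainbowTriangle c)
    {a b j : ℕ} (hab : a ≠ b) (haj : a ≠ j) (hbj : b ≠ j)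
    (ha : (monoGraph c hs a).Preconnected) (hb : (monoGraph c hs b).Preconnected)
    (hj : (monoGraph c hs j).Preconnected) : Subsingleton V := by
  revert c
  refine Finite.induction_subsingleton_or_nontrivial
    (P := fun V => ∀ {c : V → V → ℕ} (hs : ∀ u v : V, c u v = c v u),
      ¬ HasRainbowTriangle c → (monoGraph c hs a).Preconnected →
      (monoGraph c hs b).Preconnected → (monoGraph c hs j).Preconnected → Subsingleton V)
    V (fun _ _ _ _ _ _ _ _ _ => inferInstance) ?_
  intro V _ _ ih c hs hnr ha hb hj
  obtain ⟨v⟩ : Nonempty V := inferInstance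
  have hdel : ∀ {i : ℕ}, ((monoGraph c hs i).induce {v}ᶜ).Preconnected →
      (monoGraph (fun p q : ({v}ᶜ : Set V) => c p q) (fun p q => hs p q) i).Preconnected :=
    fun h => by rwa [monoGraph_restrict]
  have : Subsingleton ({v}ᶜ : Set V) :=
    ih _ (Finite.card_subtype_lt (x := v) fun h => h rfl) (fun p q => hs p q)
      (not_hasRainbowTriangle_comp Subtype.val_injective hnr)
      (hdel (preconnected_induce_compl_singleton hs hnr hbj hab.symm haj.symm hb hj ha v))
      (hdel (preconnected_induce_compl_singleton hs hnr haj hab hbj.symm ha hj hb v))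
      (hdel (preconnected_induce_compl_singleton hs hnr hab haj hbj ha hb hj v))
  obtain ⟨z, hvz, hza⟩ := ha.exists_adj_of_nontrivial v
  obtain ⟨z', hvz', hzb⟩ := hb.exists_adj_of_nontrivial v
  have hzz' : z = z' := congrArg Subtype.val
    (Subsingleton.elim (⟨z, hvz.symm⟩ : ({v}ᶜ : Set V)) ⟨z', hvz'.symm⟩)
  exact (hab (hza.symm.trans (hzz' ▸ hzb))).elim

end Gallai

theorem stmt6_general {V : Type*} [Fintype V] (k : ℕ) (hk : 3 ≤ k)
    (c : V → V → ℕ) (hs : ∀ u v : V, c u v = c v u)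
    (hsurj : ∀ i ∈ Finset.Icc 1 k, ∃ u v : V, u ≠ v ∧ c u v = i)
    (hnr : ¬ HasRainbowTriangle c) :
    ∃ i ∈ Finset.Icc 1 k, ∃ x y : V, ¬ (monoGraph c hs i).Reachable x y := by
  have mem : ∀ i, 1 ≤ i → i ≤ k → i ∈ Finset.Icc 1 k := fun i h₁ h₂ => Finset.mem_Icc.2 ⟨h₁, h₂⟩
  by_contra! hconn
  obtain ⟨u, w, huw, -⟩ := hsurj 1 (mem 1 le_rfl (by omega))
  have : Subsingleton V := subsingleton_of_preconnected_monoGraph hs hnr (a := 1) (b := 2) (j := 3)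
    (by decide) (by decide) (by decide) (hconn 1 (mem 1 le_rfl (by omega)))
    (hconn 2 (mem 2 (by omega) (by omega))) (hconn 3 (mem 3 (by omega) hk))
  exact huw (Subsingleton.elim u w)

/-- Every complete `k`-edge-colored graph with `k ≥ 3` and no rainbow
triangle has a color `i ∈ {1,…,k}` whose monochromatic subgraph `G_{|i}` is
disconnected, i.e. some pair of vertices is not joined by a walk. -/
theorem stmt6 {V : Type*} [Fintype V] [Nonempty V] (k : ℕ) (hk : 3 ≤ k)
    (c : V → V → ℕ) (hs : ∀ u v : V, c u v = c v u)
    (hrange : ∀ u v : V, u ≠ v → c u v ∈ Finset.Icc 1 k)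
    (hsurj : ∀ i ∈ Finset.Icc 1 k, ∃ u v : V, u ≠ v ∧ c u v = i)
    (hnr : ¬ HasRainbowTriangle c) :
    ∃ i ∈ Finset.Icc 1 k, ∃ x y : V, ¬ (monoGraph c hs i).Reachable x y :=
  stmt6_general k hk c hs hsurj hnr
end

section
/- Let G be a complete edge-colored graph such that for every strong module M of G with |M| ≥ 2 the quotient graph G[M]/P_max(M) is a complete edge-colored permutation graph. Then G is a complete edge-colored permutation graph. -/
/-- `M` is a strong module: a module that overlaps no other module. -/
def IsStrongModule {V : Type*} (c : V → V → ℕ) (M : Set V) : Prop :=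
  IsModule c M ∧ ∀ M' : Set V, IsModule c M' → M ⊆ M' ∨ M' ⊆ M ∨ M ∩ M' = ∅

/-- `N` is a member of `P_max(M)`: a non-empty strong module that is a proper subset
of `M` and is inclusion-maximal among strong modules properly contained in `M`. -/
def PmaxPart {V : Type*} (c : V → V → ℕ) (M N : Set V) : Prop :=
  N.Nonempty ∧ IsStrongModule c N ∧ N ⊂ M ∧
    ∀ N' : Set V, IsStrongModule c N' → N' ⊂ M → N ⊆ N' → N' = N

/-- The edge relation of the `i`-th monochromatic subgraph of the quotient graph
`G[M]/P_max(M)`: two distinct parts are adjacent with color `i` iff some (equivalently,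
by the module property, every) edge between them has color `i`. -/
def quotientMonoEdge {V : Type*} (c : V → V → ℕ) (M : Set V) (i : ℕ) :
    {N : Set V // PmaxPart c M N} → {N : Set V // PmaxPart c M N} → Prop :=
  fun N₁ N₂ => N₁ ≠ N₂ ∧ ∃ u ∈ N₁.1, ∃ v ∈ N₂.1, c u v = i

/-- The quotient graph `G[M]/P_max(M)` is a complete edge-colored permutation graph. -/
def QuotientIsCECPG {V : Type*} (c : V → V → ℕ) (M : Set V) : Prop :=
  ∃ (m : ℕ) (ℓ : {N : Set V // PmaxPart c M N} ≃ Fin m)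
    (π : ℕ → Equiv.Perm (Fin m)),
    ∀ i : ℕ, IsPermGraph (quotientMonoEdge c M i) ℓ (π i)

/-- The strong module `M` (with `|M| ≥ 2`) is series: its quotient graph has at least
two vertices and all its edges carry the same color. -/
def IsSeriesModule {V : Type*} (c : V → V → ℕ) (M : Set V) : Prop :=
  (∃ N₁ N₂ : Set V, PmaxPart c M N₁ ∧ PmaxPart c M N₂ ∧ N₁ ≠ N₂) ∧
  (∀ N₁ N₂ N₁' N₂' : Set V, PmaxPart c M N₁ → PmaxPart c M N₂ →
    PmaxPart c M N₁' → PmaxPart c M N₂' → N₁ ≠ N₂ → N₁' ≠ N₂' →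
    ∀ u v u' v' : V, u ∈ N₁ → v ∈ N₂ → u' ∈ N₁' → v' ∈ N₂' → c u v = c u' v')

/-- The color `i` appears on some edge of the quotient graph `G[M]/P_max(M)`. -/
def QuotientColorAppears {V : Type*} (c : V → V → ℕ) (M : Set V) (i : ℕ) : Prop :=
  ∃ N₁ N₂ : Set V, PmaxPart c M N₁ ∧ PmaxPart c M N₂ ∧ N₁ ≠ N₂ ∧
    ∃ u ∈ N₁, ∃ v ∈ N₂, c u v = i


/-!
Induct over the strong modules `M` of `G`, ordered by size. If `|M| ≥ 2`, the members of
`P_max(M)` partition `M`, each is realized by induction, and the quotient `G[M]/P_max(M)`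
is realized by hypothesis. Edges inside a part get their color from the part, edges between
parts from the quotient, so ordering `M` lexicographically (first by part in the quotient's
order, then inside the part) realizes `M`, for the labeling and for every color.
-/

open Function Finset

section Crossing

variable {V Q α β α₁ β₁ : Type*}

def lexSubst (part : V → Q) (f₀ : Q → α) (f₁ : Q → V → α₁) (v : V) : α ×ₗ α₁ :=
  toLex (f₀ (part v), f₁ (part v) v)

lemma injOn_lexSubst {M : Set V} {part : V → Q} {f₀ : Q → α} {f₁ : Q → V → α₁}
    (hf₀ : Injective f₀) (hf₁ : ∀ q, Set.InjOn (f₁ q) {v ∈ M | part v = q}) :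
    Set.InjOn (lexSubst part f₀ f₁) M := by
  intro u hu v hv huv
  obtain ⟨h₀, h₁⟩ := Prod.ext_iff.1 (toLex.injective huv)
  have hpart : part u = part v := hf₀ h₀
  simp only [hpart] at h₁
  exact hf₁ (part v) ⟨hu, hpart⟩ ⟨hv, rfl⟩ h₁

variable [LinearOrder α] [LinearOrder β] [LinearOrder α₁] [LinearOrder β₁]

def IsCrossingOn (E : V → V → Prop) (M : Set V) (f : V → α) (g : V → β) : Prop :=
  ∀ u ∈ M, ∀ v ∈ M, E u v ↔ (f v < f u ∧ g u < g v) ∨ (f u < f v ∧ g v < g u)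

lemma IsCrossingOn.mono {E : V → V → Prop} {M M' : Set V} {f : V → α} {g : V → β}
    (h : IsCrossingOn E M f g) (hM : M' ⊆ M) : IsCrossingOn E M' f g :=
  fun u hu v hv => h u (hM hu) v (hM hv)

lemma IsPermGraph.isCrossingOn_univ {n : ℕ} {E : V → V → Prop} {ℓ : V ≃ Fin n}
    {π : Equiv.Perm (Fin n)} (h : IsPermGraph E ℓ π) :
    IsCrossingOn E Set.univ ℓ (fun v => π⁻¹ (ℓ v)) :=
  fun u _ v _ => h u v

lemma IsCrossingOn.lexSubst {E : V → V → Prop} {EQ : Q → Q → Prop} {M : Set V}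
    {part : V → Q} {f₀ : Q → α} {g₀ : Q → β} {f₁ : Q → V → α₁} {g₁ : Q → V → β₁}
    (hout : IsCrossingOn EQ Set.univ f₀ g₀) (hf₀ : Injective f₀) (hg₀ : Injective g₀)
    (hin : ∀ q, IsCrossingOn E {v ∈ M | part v = q} (f₁ q) (g₁ q))
    (hE : ∀ u ∈ M, ∀ v ∈ M, part u ≠ part v → (E u v ↔ EQ (part u) (part v))) :
    IsCrossingOn E M (lexSubst part f₀ f₁) (lexSubst part g₀ g₁) := by
  intro u hu v hv
  simp only [_root_.lexSubst, Prod.Lex.toLex_lt_toLex]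
  by_cases hpart : part u = part v
  · have hinner := hin (part v) u ⟨hu, hpart⟩ v ⟨hv, rfl⟩
    simpa only [hpart, lt_irrefl, false_or, true_and] using hinner
  · have hf : f₀ (part u) ≠ f₀ (part v) := hf₀.ne hpart
    have hg : g₀ (part u) ≠ g₀ (part v) := hg₀.ne hpart
    simpa only [hE u hu v hv hpart, hf, hf.symm, hg, hg.symm, false_and, or_false] using
      hout (part u) trivial (part v) trivial

end Crossing

section Rank

variable {V α β : Type*} [Fintype V] [LinearOrder α] [LinearOrder β]

def rankBy (f : V → α) (v : V) : ℕ := #{w | f w < f v}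

lemma rankBy_lt_rankBy_iff {f : V → α} {u v : V} : rankBy f u < rankBy f v ↔ f u < f v := by
  constructor
  · intro h
    by_contra! hvu
    exact h.not_ge (card_le_card (monotone_filter_right _ fun w _ hw => hw.trans_le hvu))
  · intro huv
    refine card_lt_card ((ssubset_iff_of_subset ?_).2 ⟨u, by simp [huv], by simp⟩)
    exact monotone_filter_right _ fun w _ hw => hw.trans huv

lemma rankBy_lt_card (f : V → α) (v : V) : rankBy f v < Fintype.card V :=
  card_lt_card (filter_ssubset.2 ⟨v, mem_univ v, lt_irrefl _⟩)

lemma Set.InjOn.rankBy {f : V → α} {M : Set V} (hf : Set.InjOn f M) :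
    Set.InjOn (rankBy f) M := fun _ hu _ hv h =>
  hf hu hv (le_antisymm (not_lt.1 fun h' => (rankBy_lt_rankBy_iff.2 h').ne' h)
    (not_lt.1 fun h' => (rankBy_lt_rankBy_iff.2 h').ne h))

lemma IsCrossingOn.rankBy {E : V → V → Prop} {M : Set V} {f : V → α} {g : V → β}
    (h : IsCrossingOn E M f g) : IsCrossingOn E M (rankBy f) (rankBy g) := by
  simpa only [IsCrossingOn, rankBy_lt_rankBy_iff] using h

noncomputable def rankEquiv (f : V → α) (hf : Injective f) : V ≃ Fin (Fintype.card V) :=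
  Equiv.ofBijective (fun v => ⟨rankBy f v, rankBy_lt_card f v⟩)
    ((Fintype.bijective_iff_injective_and_card _).2
      ⟨fun _ _ h => (Set.injOn_univ.2 hf).rankBy trivial trivial (Fin.val_eq_of_eq h),
        (Fintype.card_fin _).symm⟩)

lemma rankEquiv_lt_rankEquiv_iff {f : V → α} {hf : Injective f} {u v : V} :
    rankEquiv f hf u < rankEquiv f hf v ↔ f u < f v :=
  Fin.lt_def.trans rankBy_lt_rankBy_iff

end Rank

section Realizer

variable {V α β : Type*} [LinearOrder α] [LinearOrder β] {c : V → V → ℕ} {M : Set V}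

/-- The orders `f` and `g i` stand for the paper's labeling `ℓ` and for `π_i⁻¹ ∘ ℓ`; working
with them on an arbitrary subset `M` avoids restricting `G` to subgraphs. -/
def IsPermRealizableOn (c : V → V → ℕ) (M : Set V) : Prop :=
  ∃ (f : V → ℕ) (g : ℕ → V → ℕ),
    Set.InjOn f M ∧ ∀ i, Set.InjOn (g i) M ∧ IsCrossingOn (monoEdge c i) M f (g i)

lemma isPermRealizableOn_of_subsingleton (hM : M.Subsingleton) : IsPermRealizableOn c M :=
  ⟨0, fun _ => 0, hM.injOn _, fun _ => ⟨hM.injOn _, fun _ hu _ hv => by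
    simp [monoEdge, hM hu hv]⟩⟩

lemma isPermRealizableOn_of_isCrossingOn [Fintype V] (f : V → α) (g : ℕ → V → β)
    (hf : Set.InjOn f M) (hg : ∀ i, Set.InjOn (g i) M ∧ IsCrossingOn (monoEdge c i) M f (g i)) :
    IsPermRealizableOn c M :=
  ⟨rankBy f, fun i => rankBy (g i), hf.rankBy, fun i => ⟨(hg i).1.rankBy, (hg i).2.rankBy⟩⟩

lemma IsPermRealizableOn.isCECPG [Fintype V] (h : IsPermRealizableOn c Set.univ) :
    IsCECPG c := by
  obtain ⟨f, g, hf, hg⟩ := h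
  let ℓ := rankEquiv f (Set.injOn_univ.1 hf)
  let ρ := fun i => rankEquiv (g i) (Set.injOn_univ.1 (hg i).1)
  refine ⟨ℓ, fun i => (ρ i).symm.trans ℓ, fun i u v => ?_⟩
  have hπ : ∀ w, ((ρ i).symm.trans ℓ)⁻¹ (ℓ w) = ρ i w := by simp [Equiv.Perm.inv_def]
  simpa only [IsPermGraph, hπ, ℓ, ρ, rankEquiv_lt_rankEquiv_iff] using
    (hg i).2 u trivial v trivial

end Realizer

section Modules

variable {V : Type*} {c : V → V → ℕ} {M N₁ N₂ : Set V}

lemma isStrongModule_univ (c : V → V → ℕ) : IsStrongModule c Set.univ :=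
  ⟨fun _ _ _ _ v hv => absurd (Set.mem_univ v) hv, fun M' _ => Or.inr (Or.inl M'.subset_univ)⟩

lemma isStrongModule_singleton (c : V → V → ℕ) (v : V) : IsStrongModule c {v} := by
  refine ⟨fun u hu w hw x _ => by rw [hu, hw], fun M' _ => ?_⟩
  by_cases hv : v ∈ M'
  · exact Or.inl (Set.singleton_subset_iff.2 hv)
  · exact Or.inr (Or.inr (Set.singleton_inter_eq_empty.2 hv))

lemma PmaxPart.eq_of_mem {x : V} (h₁ : PmaxPart c M N₁) (h₂ : PmaxPart c M N₂)
    (hx₁ : x ∈ N₁) (hx₂ : x ∈ N₂) : N₁ = N₂ := by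
  rcases h₁.2.1.2 N₂ h₂.2.1.1 with h | h | h
  · exact (h₁.2.2.2 N₂ h₂.2.1 h₂.2.2.1 h).symm
  · exact h₂.2.2.2 N₁ h₁.2.1 h₁.2.2.1 h
  · exact (Set.eq_empty_iff_forall_notMem.1 h x ⟨hx₁, hx₂⟩).elim

lemma PmaxPart.ncard_lt [Finite V] (h : PmaxPart c M N₁) : N₁.ncard < M.ncard :=
  Set.ncard_lt_ncard h.2.2.1

lemma exists_pmaxPart_mem [Finite V] {v : V} (hM : 2 ≤ M.ncard) (hv : v ∈ M) :
    ∃ N, PmaxPart c M N ∧ v ∈ N := by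
  have hvM : {v} ⊂ M := Set.ssubset_iff_subset_ne.2 ⟨Set.singleton_subset_iff.2 hv, fun h => by
    rw [← h, Set.ncard_singleton] at hM
    omega⟩
  obtain ⟨N, hvN, hmax⟩ := Finite.exists_le_maximal
    (p := fun N : Set V => IsStrongModule c N ∧ N ⊂ M ∧ v ∈ N)
    ⟨isStrongModule_singleton c v, hvM, rfl⟩
  refine ⟨N, ⟨⟨v, hmax.1.2.2⟩, hmax.1.1, hmax.1.2.1, fun N' hN' hN'M hNN' => ?_⟩, hmax.1.2.2⟩
  exact hmax.eq_of_ge ⟨hN', hN'M, hNN' hmax.1.2.2⟩ hNN'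

lemma monoEdge_iff_quotientMonoEdge (hsym : ∀ u v, c u v = c v u)
    {N₁ N₂ : {N // PmaxPart c M N}} (hN : N₁ ≠ N₂) {u v : V} (hu : u ∈ N₁.1) (hv : v ∈ N₂.1)
    (i : ℕ) : monoEdge c i u v ↔ quotientMonoEdge c M i N₁ N₂ := by
  have hdisj : ∀ {x}, x ∈ N₁.1 → x ∉ N₂.1 := fun hx₁ hx₂ =>
    hN (Subtype.ext (N₁.2.eq_of_mem N₂.2 hx₁ hx₂))
  refine ⟨fun h => ⟨hN, u, hu, v, hv, h.2⟩, fun ⟨_, u', hu', v', hv', h⟩ => ⟨?_, ?_⟩⟩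
  · rintro rfl
    exact hdisj hu hv
  · calc c u v = c u' v := N₁.2.2.1.1 u hu u' hu' v fun hv₁ => hdisj hv₁ hv
      _ = c v' u' := by rw [hsym, N₂.2.2.1.1 v hv v' hv' u' (hdisj hu')]
      _ = i := by rw [hsym, h]

end Modules

section Induction

variable {V : Type*} [Fintype V] {c : V → V → ℕ}

lemma isPermRealizableOn_of_pmaxPart {M : Set V} (hsym : ∀ u v, c u v = c v u)
    (hM : 2 ≤ M.ncard) (hQ : QuotientIsCECPG c M)
    (hparts : ∀ N, PmaxPart c M N → IsPermRealizableOn c N) : IsPermRealizableOn c M := by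
  obtain ⟨m, ℓ, π, hπ⟩ := hQ
  have hcover : ∀ v, ∃ N : {N // PmaxPart c M N}, v ∈ M → v ∈ N.1 := by
    have hpartOf : ∀ v ∈ M, ∃ N : {N // PmaxPart c M N}, v ∈ N.1 := fun v hv =>
      let ⟨N, hN, hvN⟩ := exists_pmaxPart_mem hM hv
      ⟨⟨N, hN⟩, hvN⟩
    intro v
    by_cases hv : v ∈ M
    · obtain ⟨N, hvN⟩ := hpartOf v hv
      exact ⟨N, fun _ => hvN⟩
    · obtain ⟨w, hw⟩ := Set.nonempty_of_ncard_ne_zero (by omega : M.ncard ≠ 0)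
      exact ⟨(hpartOf w hw).choose, fun h => absurd h hv⟩
  choose part hpart using hcover
  choose f g hf hg using fun N : {N // PmaxPart c M N} => hparts N.1 N.2
  have hfiber : ∀ q, {v ∈ M | part v = q} ⊆ q.1 := by
    rintro q v ⟨hv, rfl⟩
    exact hpart v hv
  have hg₀ : ∀ i, Injective fun N => (π i)⁻¹ (ℓ N) := fun i => (π i)⁻¹.injective.comp ℓ.injective
  refine isPermRealizableOn_of_isCrossingOn (lexSubst part ℓ f)
    (fun i => lexSubst part (fun N => (π i)⁻¹ (ℓ N)) fun N => g N i)
    (injOn_lexSubst ℓ.injective fun q => (hf q).mono (hfiber q)) fun i =>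
      ⟨injOn_lexSubst (hg₀ i) fun q => (hg q i).1.mono (hfiber q),
        (hπ i).isCrossingOn_univ.lexSubst ℓ.injective (hg₀ i)
          (fun q => (hg q i).2.mono (hfiber q)) fun u hu v hv h =>
            monoEdge_iff_quotientMonoEdge hsym h (hpart u hu) (hpart v hv) i⟩

theorem isPermRealizableOn_of_isStrongModule (hsym : ∀ u v, c u v = c v u)
    (hq : ∀ M : Set V, IsStrongModule c M → 2 ≤ M.ncard → QuotientIsCECPG c M)
    {M : Set V} (hM : IsStrongModule c M) : IsPermRealizableOn c M := by
  induction hn : M.ncard using Nat.strong_induction_on generalizing M with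
  | _ n ih =>
  rcases lt_or_ge M.ncard 2 with h1 | h2
  · exact isPermRealizableOn_of_subsingleton (Set.ncard_le_one_iff_subsingleton.1 (by omega))
  · exact isPermRealizableOn_of_pmaxPart hsym h2 (hq M hM h2) fun N hN =>
      ih _ (hn ▸ hN.ncard_lt) hN.2.1 rfl

end Induction

theorem stmt13_general {V : Type*} [Fintype V] (k : ℕ) (c : V → V → ℕ)
    (hc : IsCompleteColoring k c)
    (hq : ∀ M : Set V, IsStrongModule c M → 2 ≤ M.ncard → QuotientIsCECPG c M) :
    IsCECPG c :=
  (isPermRealizableOn_of_isStrongModule hc.1 hq (isStrongModule_univ c)).isCECPG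

/-- If for every strong module `M` of `G` with `|M| ≥ 2` the quotient
graph `G[M]/P_max(M)` is a complete edge-colored permutation graph, then `G` is a
complete edge-colored permutation graph. -/
theorem stmt13 {V : Type*} [Fintype V] [Nonempty V] (k : ℕ) (c : V → V → ℕ)
    (hc : IsCompleteColoring k c)
    (hq : ∀ M : Set V, IsStrongModule c M → 2 ≤ M.ncard → QuotientIsCECPG c M) :
    IsCECPG c :=
  stmt13_general k c hc hq
end
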